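/- arXiv:1309.5589 — 4 statements merged into one kernel-verified Lean document; each statement's English description precedes it below -/
import Mathlib

section
/- Let (X,d) be a metric space, T : X → X a generalized quasi-contraction with constant q ∈ [0,1), and suppose X is T-orbitally complete, with unique fixed point x*. Then for every x ∈ X and every n ∈ ℕ, d(Tⁿx, x*) ≤ (qⁿ / (1 − q)) · d(x, Tx). -/
/-!
Ćirić's orbit-diameter argument. Let `δₙ(x)` be the diameter of `{x, Tx, …, Tⁿx}`. For
`1 ≤ i, j ≤ n` the nine distances controlling `d(Tⁱx, Tʲx)` are distances within this segment,
so `d(Tⁱx, Tʲx) ≤ q δₙ(x)`; together with `d(x, Tʲx) ≤ d(x, Tx) + d(Tx, Tʲx)` this gives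
`δₙ(x) ≤ d(x, Tx) / (1 - q)`, and shifting the segment gives `δᵣ(Tⁿx) ≤ qⁿ d(x, Tx) / (1 - q)`.
At the fixed point `x*` the condition gives `aₘ₊₁ ≤ q · max(aₘ, aₘ₊₁, aₘ₊₂, δ₂(Tᵐx))` for
`aₘ = d(Tᵐx, x*)`, so `aₘ → 0` geometrically, and letting `k → ∞` in
`d(Tⁿx, x*) ≤ d(Tⁿx, Tⁿ⁺ᵏx) + aₙ₊ₖ` gives the estimate.
-/

open Filter Topology Function Metric

theorem le_pow_mul_of_le_mul_max {a b : ℕ → ℝ} {q C : ℝ} (hq0 : 0 ≤ q) (hq1 : q ≤ 1)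
    (hC : 0 ≤ C) (ha : ∀ m, a m ≤ C) (hb : ∀ m, b m ≤ q ^ m * C)
    (hrec : ∀ m, a (m + 1) ≤ q * max (max (a m) (a (m + 1))) (max (a (m + 2)) (b m)))
    (m : ℕ) : a m ≤ q ^ m * C := by
  suffices h : ∀ k m, k ≤ m → a m ≤ q ^ k * C from h m m le_rfl
  intro k
  induction k with
  | zero => simpa using ha
  | succ k ih =>
    intro m hm
    obtain ⟨m, rfl⟩ := Nat.exists_eq_add_of_le' (Nat.one_le_of_lt hm)
    have hbm : b m ≤ q ^ k * C :=
      (hb m).trans (mul_le_mul_of_nonneg_right (pow_le_pow_of_le_one hq0 hq1 (by omega)) hC)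
    calc a (m + 1) ≤ q * max (max (a m) (a (m + 1))) (max (a (m + 2)) (b m)) := hrec m
      _ ≤ q * (q ^ k * C) := by
        gcongr
        exact max_le (max_le (ih m (by omega)) (ih _ (by omega))) (max_le (ih _ (by omega)) hbm)
      _ = q ^ (k + 1) * C := by ring

section GeneralizedQuasiContraction

variable {X : Type*}

def orbitSegment (T : X → X) (x : X) (n : ℕ) : Set X :=
  (fun k => T^[k] x) '' Set.Iic n

theorem iterate_mem_orbitSegment (T : X → X) (x : X) {k n : ℕ} (hk : k ≤ n) :
    T^[k] x ∈ orbitSegment T x n :=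
  ⟨k, hk, rfl⟩

variable [MetricSpace X]

def IsGeneralizedQuasiContraction (T : X → X) (q : ℝ) : Prop :=
  ∀ x y : X, dist (T x) (T y) ≤ q * (max (dist x y) (max (dist x (T x)) (max (dist y (T y))
    (max (dist x (T y)) (max (dist y (T x)) (max (dist (T (T x)) x) (max (dist (T (T x)) (T x))
      (max (dist (T (T x)) y) (dist (T (T x)) (T y))))))))))

theorem dist_le_diam_orbitSegment (T : X → X) (x : X) {n : ℕ} {u v : X}
    (hu : u ∈ orbitSegment T x n) (hv : v ∈ orbitSegment T x n) :
    dist u v ≤ diam (orbitSegment T x n) :=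
  dist_le_diam_of_mem ((Set.finite_Iic n).image _).isBounded hu hv

variable {T : X → X} {q : ℝ}

theorem dist_iterate_le_mul_diam_orbitSegment (hT : IsGeneralizedQuasiContraction T q)
    (hq0 : 0 ≤ q) (x : X) {n i j : ℕ} (hi : 1 ≤ i) (hj : 1 ≤ j) (hin : i ≤ n) (hjn : j ≤ n) :
    dist (T^[i] x) (T^[j] x) ≤ q * diam (orbitSegment T x n) := by
  wlog hij : i < j generalizing i j
  · rcases (not_lt.1 hij).eq_or_lt with rfl | hji
    · rw [dist_self]
      exact mul_nonneg hq0 diam_nonneg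
    · rw [dist_comm]
      exact this hj hi hjn hin hji
  obtain ⟨a, rfl⟩ := Nat.exists_eq_add_of_le' hi
  obtain ⟨b, rfl⟩ := Nat.exists_eq_add_of_le' hj
  have h := hT (T^[a] x) (T^[b] x)
  simp only [← iterate_succ_apply' T] at h
  refine h.trans (mul_le_mul_of_nonneg_left ?_ hq0)
  simp only [max_le_iff]
  refine ⟨?_, ?_, ?_, ?_, ?_, ?_, ?_, ?_, ?_⟩ <;>
    exact dist_le_diam_orbitSegment T x (iterate_mem_orbitSegment T x (by omega))
      (iterate_mem_orbitSegment T x (by omega))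

theorem dist_iterate_le_dist_apply_add_mul_diam (hT : IsGeneralizedQuasiContraction T q)
    (hq0 : 0 ≤ q) (x : X) {n j : ℕ} (hjn : j ≤ n) :
    dist x (T^[j] x) ≤ dist x (T x) + q * diam (orbitSegment T x n) := by
  rcases Nat.eq_zero_or_pos j with rfl | hj
  · rw [iterate_zero_apply, dist_self]
    exact add_nonneg dist_nonneg (mul_nonneg hq0 diam_nonneg)
  calc dist x (T^[j] x) ≤ dist x (T^[1] x) + dist (T^[1] x) (T^[j] x) := dist_triangle _ _ _
    _ ≤ dist x (T x) + q * diam (orbitSegment T x n) := by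
      gcongr
      · exact le_rfl
      · exact dist_iterate_le_mul_diam_orbitSegment hT hq0 x le_rfl hj (by omega) hjn

theorem diam_orbitSegment_le (hT : IsGeneralizedQuasiContraction T q) (hq0 : 0 ≤ q)
    (hq1 : q < 1) (x : X) (n : ℕ) :
    diam (orbitSegment T x n) ≤ dist x (T x) / (1 - q) := by
  set δ := diam (orbitSegment T x n)
  have hδ : δ ≤ dist x (T x) + q * δ := by
    refine diam_le_of_forall_dist_le (add_nonneg dist_nonneg (mul_nonneg hq0 diam_nonneg)) ?_
    rintro _ ⟨i, hi, rfl⟩ _ ⟨j, hj, rfl⟩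
    rcases Nat.eq_zero_or_pos i with rfl | hi1
    · exact dist_iterate_le_dist_apply_add_mul_diam hT hq0 x hj
    rcases Nat.eq_zero_or_pos j with rfl | hj1
    · rw [dist_comm]
      exact dist_iterate_le_dist_apply_add_mul_diam hT hq0 x hi
    · exact (dist_iterate_le_mul_diam_orbitSegment hT hq0 x hi1 hj1 hi hj).trans
        (le_add_of_nonneg_left dist_nonneg)
  rw [le_div_iff₀ (by linarith)]
  linarith

theorem diam_orbitSegment_apply_le (hT : IsGeneralizedQuasiContraction T q) (hq0 : 0 ≤ q)
    (x : X) (r : ℕ) :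
    diam (orbitSegment T (T x) r) ≤ q * diam (orbitSegment T x (r + 1)) := by
  refine diam_le_of_forall_dist_le (mul_nonneg hq0 diam_nonneg) ?_
  rintro _ ⟨a, ha, rfl⟩ _ ⟨b, hb, rfl⟩
  exact dist_iterate_le_mul_diam_orbitSegment hT hq0 x (i := a + 1) (j := b + 1)
    (by omega) (by omega) (by simpa using ha) (by simpa using hb)

theorem diam_orbitSegment_iterate_le (hT : IsGeneralizedQuasiContraction T q) (hq0 : 0 ≤ q)
    (hq1 : q < 1) (x : X) (n r : ℕ) :
    diam (orbitSegment T (T^[n] x) r) ≤ q ^ n * (dist x (T x) / (1 - q)) := by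
  induction n generalizing x r with
  | zero => simpa using diam_orbitSegment_le hT hq0 hq1 x r
  | succ n ih =>
    calc diam (orbitSegment T (T^[n] (T x)) r)
        ≤ q * diam (orbitSegment T (T^[n] x) (r + 1)) := by
          rw [← iterate_succ_apply, iterate_succ_apply']
          exact diam_orbitSegment_apply_le hT hq0 _ r
      _ ≤ q * (q ^ n * (dist x (T x) / (1 - q))) := by gcongr; exact ih x (r + 1)
      _ = q ^ (n + 1) * (dist x (T x) / (1 - q)) := by ring

theorem dist_iterate_add_le (hT : IsGeneralizedQuasiContraction T q) (hq0 : 0 ≤ q) (hq1 : q < 1)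
    (x : X) (n k : ℕ) :
    dist (T^[n] x) (T^[k + n] x) ≤ q ^ n * (dist x (T x) / (1 - q)) := by
  rw [iterate_add_apply]
  exact (dist_le_diam_orbitSegment T _ (iterate_mem_orbitSegment T _ (Nat.zero_le k))
    (iterate_mem_orbitSegment T _ le_rfl)).trans (diam_orbitSegment_iterate_le hT hq0 hq1 x n k)

theorem dist_apply_le_of_isFixedPt (hT : IsGeneralizedQuasiContraction T q) (hq0 : 0 ≤ q)
    {p : X} (hp : IsFixedPt T p) (y : X) :
    dist (T y) p ≤ q * max (max (dist y p) (dist (T y) p))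
      (max (dist (T (T y)) p) (diam (orbitSegment T y 2))) := by
  have h := hT y p
  rw [hp.eq] at h
  refine h.trans (mul_le_mul_of_nonneg_left ?_ hq0)
  have hdiam {i j : ℕ} (hi : i ≤ 2) (hj : j ≤ 2) :
      dist (T^[i] y) (T^[j] y) ≤ diam (orbitSegment T y 2) :=
    dist_le_diam_orbitSegment T y (iterate_mem_orbitSegment T y hi)
      (iterate_mem_orbitSegment T y hj)
  set M := max (max (dist y p) (dist (T y) p)) (max (dist (T (T y)) p) (diam (orbitSegment T y 2)))
  have h₀ : dist y p ≤ M := le_max_of_le_left (le_max_left _ _)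
  have h₁ : dist (T y) p ≤ M := le_max_of_le_left (le_max_right _ _)
  have h₂ : dist (T (T y)) p ≤ M := le_max_of_le_right (le_max_left _ _)
  have hD : diam (orbitSegment T y 2) ≤ M := le_max_of_le_right (le_max_right _ _)
  simp only [max_le_iff, dist_self, dist_comm p (T y)]
  exact ⟨h₀, (hdiam (i := 0) (j := 1) (by omega) (by omega)).trans hD, dist_nonneg.trans h₀, h₀,
    h₁, (hdiam (i := 2) (j := 0) (by omega) (by omega)).trans hD,
    (hdiam (i := 2) (j := 1) (by omega) (by omega)).trans hD, h₂, h₂⟩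

theorem dist_iterate_le_of_isFixedPt (hT : IsGeneralizedQuasiContraction T q) (hq0 : 0 ≤ q)
    (hq1 : q < 1) {p : X} (hp : IsFixedPt T p) (x : X) (m : ℕ) :
    dist (T^[m] x) p ≤ q ^ m * (dist x p + dist x (T x) / (1 - q)) := by
  have hK : 0 ≤ dist x (T x) / (1 - q) := div_nonneg dist_nonneg (by linarith)
  refine le_pow_mul_of_le_mul_max (a := fun m => dist (T^[m] x) p)
    (b := fun m => diam (orbitSegment T (T^[m] x) 2)) hq0 hq1.le (add_nonneg dist_nonneg hK)
    (fun m => ?_) (fun m => ?_) (fun m => ?_) m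
  · calc dist (T^[m] x) p ≤ dist x (T^[m] x) + dist x p := dist_triangle_left _ _ _
      _ ≤ dist x (T x) / (1 - q) + dist x p := by
        gcongr
        simpa using dist_iterate_add_le hT hq0 hq1 x 0 m
      _ = dist x p + dist x (T x) / (1 - q) := add_comm _ _
  · exact (diam_orbitSegment_iterate_le hT hq0 hq1 x m 2).trans
      (by gcongr; exact le_add_of_nonneg_left dist_nonneg)
  · simpa only [iterate_succ_apply'] using dist_apply_le_of_isFixedPt hT hq0 hp (T^[m] x)

end GeneralizedQuasiContraction

theorem stmt2_general {X : Type*} [MetricSpace X] (T : X → X) (q : ℝ) (hq0 : 0 ≤ q) (hq1 : q < 1)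
    (hT : ∀ x y : X, dist (T x) (T y) ≤ q * (max (dist x y) (max (dist x (T x)) (max (dist y (T y)) (max (dist x (T y)) (max (dist y (T x)) (max (dist (T (T x)) x) (max (dist (T (T x)) (T x)) (max (dist (T (T x)) y) (dist (T (T x)) (T y)))))))))))
    (xs : X) (hfix : T xs = xs)
    : ∀ (x : X) (n : ℕ), dist (T^[n] x) xs ≤ q ^ n / (1 - q) * dist x (T x) := by
  intro x n
  set K := dist x (T x) / (1 - q)
  have hlim : Tendsto (fun k => q ^ n * K + q ^ (k + n) * (dist x xs + K)) atTop
      (𝓝 (q ^ n * K)) := by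
    simpa using tendsto_const_nhds.add
      (((tendsto_pow_atTop_nhds_zero_of_lt_one hq0 hq1).comp (tendsto_add_atTop_nat n)).mul_const
        (dist x xs + K))
  rw [div_mul_eq_mul_div, mul_div_assoc]
  refine ge_of_tendsto' hlim fun k => ?_
  calc dist (T^[n] x) xs ≤ dist (T^[n] x) (T^[k + n] x) + dist (T^[k + n] x) xs :=
        dist_triangle _ _ _
    _ ≤ q ^ n * K + q ^ (k + n) * (dist x xs + K) :=
        add_le_add (dist_iterate_add_le hT hq0 hq1 x n k)
          (dist_iterate_le_of_isFixedPt hT hq0 hq1 hfix x (k + n))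

/-- Error estimate for the Picard iterates of a generalized
quasi-contraction on a `T`-orbitally complete metric space. -/
theorem stmt2 {X : Type*} [MetricSpace X] (T : X → X) (q : ℝ) (hq0 : 0 ≤ q) (hq1 : q < 1)
    (hT : ∀ x y : X, dist (T x) (T y) ≤ q * (max (dist x y) (max (dist x (T x)) (max (dist y (T y)) (max (dist x (T y)) (max (dist y (T x)) (max (dist (T (T x)) x) (max (dist (T (T x)) (T x)) (max (dist (T (T x)) y) (dist (T (T x)) (T y)))))))))))
    (horb : ∀ x : X, ∀ u : ℕ → X, (∀ n : ℕ, ∃ m : ℕ, u n = T^[m] x) →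
      CauchySeq u → ∃ y : X, Tendsto u atTop (𝓝 y))
    (xs : X) (hfix : T xs = xs) (huniq : ∀ y : X, T y = y → y = xs)
    : ∀ (x : X) (n : ℕ), dist (T^[n] x) xs ≤ q ^ n / (1 - q) * dist x (T x) :=
  stmt2_general T q hq0 hq1 hT xs hfix
end

section
/- Let (X,d) be a metric space and T : X → X a map such that X is T-orbitally complete and there exist k ∈ ℕ, k ≥ 1, and q ∈ [0,1) such that for all x, y ∈ X, d(Tᵏx, Tᵏy) ≤ q · max{d(x,y), d(x,Tᵏx), d(y,Tᵏy), d(x,Tᵏy), d(y,Tᵏx), d(T²ᵏx,x), d(T²ᵏx,Tᵏx), d(T²ᵏx,y), d(T²ᵏx,Tᵏy)}, with unique fixed point x*. Then for every x ∈ X and n ∈ ℕ, d(Tⁿx, x*) ≤ (qᵐ / (1 − q)) · max{d(Tⁱx, Tⁱ⁺ᵏx) : i = 0, 1, ..., k−1}, where m is the greatest integer not exceeding n/k. -/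
open Filter Topology

/-!
With `S = Tᵏ` (so `S ∘ S = T²ᵏ`) the hypothesis is a Ćirić-type quasi-contraction
condition for `S`. For points of an `S`-orbit every distance in the nine-term maximum is a distance
between orbit points, so the diameter `Δ` of the first `n + 1` orbit points satisfies
`Δ ≤ d(y, Sy) + qΔ`; iterating the condition shows that the tail of the orbit from index `m` on has
diameter at most `qᵐ d(y, Sy) / (1 - q)`. Against the fixed point the condition reduces to
`d(Sx, x*) ≤ q max {d(x, x*), d(x, Sx)}`, which gives the same geometric bound for `d(Sᵐy, x*)`.
Taking `y = T^(n mod k) x` and `m = n / k` yields the estimate.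
-/

lemma le_div_one_sub_of_le_add_mul {M b q : ℝ} (hq1 : q < 1) (h : M ≤ b + q * M) :
    M ≤ b / (1 - q) := by
  rw [le_div_iff₀ (by linarith)]
  linarith

lemma le_mul_of_le_mul_max {a u q : ℝ} (hq0 : 0 ≤ q) (hq1 : q < 1) (hu : 0 ≤ u)
    (h : a ≤ q * max u a) : a ≤ q * u := by
  rcases le_total a u with hau | hua
  · rwa [max_eq_left hau] at h
  · rw [max_eq_right hua] at h
    nlinarith [mul_nonneg hq0 hu]

section QuasiContraction

variable {X : Type*} [MetricSpace X]

/-- The nine-term maximum of the contraction condition, with `S = Tᵏ` and `S (S x) = T²ᵏ x`. -/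
def quasiContractionMax (S : X → X) (x y : X) : ℝ :=
  max (dist x y) (max (dist x (S x)) (max (dist y (S y)) (max (dist x (S y)) (max (dist y (S x))
    (max (dist (S (S x)) x) (max (dist (S (S x)) (S x)) (max (dist (S (S x)) y)
      (dist (S (S x)) (S y)))))))))

def IsQuasiContraction (S : X → X) (q : ℝ) : Prop :=
  ∀ x y, dist (S x) (S y) ≤ q * quasiContractionMax S x y

variable {S : X → X} {q : ℝ}

lemma dist_iterate_succ_le_mul (hS : IsQuasiContraction S q)
    (hq0 : 0 ≤ q) {y : X} {i j : ℕ} {B : ℝ} (hij : i ≤ j)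
    (hB : ∀ a b, i ≤ a → a ≤ j + 1 → i ≤ b → b ≤ j + 1 → dist (S^[a] y) (S^[b] y) ≤ B) :
    dist (S^[i + 1] y) (S^[j + 1] y) ≤ q * B := by
  rcases hij.eq_or_lt with rfl | hij
  · rw [dist_self]
    exact mul_nonneg hq0 (dist_self (S^[i] y) ▸ hB i i le_rfl (by omega) le_rfl (by omega))
  have h := hS (S^[i] y) (S^[j] y)
  simp only [quasiContractionMax, ← Function.iterate_succ_apply' S] at h
  refine h.trans (mul_le_mul_of_nonneg_left ?_ hq0)
  simp only [max_le_iff]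
  refine ⟨?_, ?_, ?_, ?_, ?_, ?_, ?_, ?_, ?_⟩ <;>
    exact hB _ _ (by omega) (by omega) (by omega) (by omega)

lemma diam_iterate_image_Iic_le (hS : IsQuasiContraction S q)
    (hq0 : 0 ≤ q) (hq1 : q < 1) (y : X) (n : ℕ) :
    Metric.diam ((S^[·] y) '' Set.Iic n) ≤ dist y (S y) / (1 - q) := by
  set Δ := Metric.diam ((S^[·] y) '' Set.Iic n)
  have hΔ : ∀ a b, a ≤ n → b ≤ n → dist (S^[a] y) (S^[b] y) ≤ Δ := fun a b ha hb =>
    Metric.dist_le_diam_of_mem ((Set.finite_Iic n).image _).isBounded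
      ⟨a, ha, rfl⟩ ⟨b, hb, rfl⟩
  have hstep : ∀ a b, a ≤ b → b ≤ n → dist (S^[a] y) (S^[b] y) ≤ dist y (S y) + q * Δ := by
    intro a b hab hbn
    have hqΔ : ∀ i j, i ≤ j → j + 1 ≤ n → dist (S^[i + 1] y) (S^[j + 1] y) ≤ q * Δ :=
      fun i j hij hjn => dist_iterate_succ_le_mul hS hq0 hij
        fun a b _ ha _ hb => hΔ a b (by omega) (by omega)
    have hqΔ0 : 0 ≤ q * Δ := mul_nonneg hq0 Metric.diam_nonneg
    match a, b with
    | 0, 0 => simpa using add_nonneg dist_nonneg hqΔ0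
    | 0, j + 1 =>
      calc dist y (S^[j + 1] y) ≤ dist y (S y) + dist (S y) (S^[j + 1] y) := dist_triangle _ _ _
        _ ≤ dist y (S y) + q * Δ := by gcongr; exact hqΔ 0 j (by omega) hbn
    | i + 1, j + 1 => exact le_add_of_nonneg_of_le dist_nonneg (hqΔ i j (by omega) hbn)
  refine le_div_one_sub_of_le_add_mul hq1 <| Metric.diam_le_of_forall_dist_le
    (add_nonneg dist_nonneg (mul_nonneg hq0 Metric.diam_nonneg)) ?_
  rintro _ ⟨a, ha, rfl⟩ _ ⟨b, hb, rfl⟩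
  rcases le_total a b with hab | hba
  · exact hstep a b hab hb
  · exact dist_comm (S^[a] y) _ ▸ hstep b a hba ha

lemma dist_iterate_iterate_le (hS : IsQuasiContraction S q)
    (hq0 : 0 ≤ q) (hq1 : q < 1) (y : X) (i j : ℕ) :
    dist (S^[i] y) (S^[j] y) ≤ dist y (S y) / (1 - q) :=
  (Metric.dist_le_diam_of_mem ((Set.finite_Iic (max i j)).image _).isBounded
    ⟨i, le_max_left i j, rfl⟩ ⟨j, le_max_right i j, rfl⟩).trans
    (diam_iterate_image_Iic_le hS hq0 hq1 y (max i j))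

lemma dist_iterate_iterate_le_pow (hS : IsQuasiContraction S q)
    (hq0 : 0 ≤ q) (hq1 : q < 1) (y : X) {m i j : ℕ} (hi : m ≤ i) (hj : m ≤ j) :
    dist (S^[i] y) (S^[j] y) ≤ q ^ m * (dist y (S y) / (1 - q)) := by
  induction m generalizing i j with
  | zero => simpa using dist_iterate_iterate_le hS hq0 hq1 y i j
  | succ m ih =>
    obtain ⟨i, rfl⟩ : ∃ i', i = i' + 1 := ⟨i - 1, by omega⟩
    obtain ⟨j, rfl⟩ : ∃ j', j = j' + 1 := ⟨j - 1, by omega⟩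
    have hsucc : ∀ i j, m ≤ i → i ≤ j →
        dist (S^[i + 1] y) (S^[j + 1] y) ≤ q ^ (m + 1) * (dist y (S y) / (1 - q)) := by
      intro i j hi hij
      rw [pow_succ', mul_assoc]
      exact dist_iterate_succ_le_mul hS hq0 hij fun a b ha _ hb _ => ih (by omega) (by omega)
    rcases le_total i j with hij | hji
    · exact hsucc i j (by omega) hij
    · exact dist_comm (S^[j + 1] y) _ ▸ hsucc j i (by omega) hji

variable {xs : X}

lemma dist_apply_le_of_isFixedPt_s7 (hS : IsQuasiContraction S q)
    (hq0 : 0 ≤ q) (hq1 : q < 1) (hxs : Function.IsFixedPt S xs) (x : X) :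
    dist (S x) xs ≤ q * max (dist x xs) (dist x (S x)) := by
  have h := hS xs x
  simp only [quasiContractionMax, hxs.eq, dist_self, dist_comm xs] at h
  refine le_mul_of_le_mul_max hq0 hq1 (le_max_of_le_left dist_nonneg)
    (h.trans (mul_le_mul_of_nonneg_left ?_ hq0))
  simp only [max_le_iff]
  and_intros <;> simp only [le_max_iff, le_refl, dist_nonneg, true_or, or_true]

lemma dist_le_of_isFixedPt (hS : IsQuasiContraction S q)
    (hq0 : 0 ≤ q) (hq1 : q < 1) (hxs : Function.IsFixedPt S xs) (y : X) :
    dist y xs ≤ dist y (S y) / (1 - q) := by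
  set M := max (dist y xs) (dist y (S y))
  have hM : M ≤ dist y (S y) + q * M :=
    max_le ((dist_triangle y (S y) xs).trans
      (add_le_add le_rfl (dist_apply_le_of_isFixedPt_s7 hS hq0 hq1 hxs y)))
      (le_add_of_nonneg_right (mul_nonneg hq0 (le_max_of_le_left dist_nonneg)))
  exact (le_max_left _ _).trans (le_div_one_sub_of_le_add_mul hq1 hM)

lemma dist_iterate_le_of_isFixedPt_s7 (hS : IsQuasiContraction S q)
    (hq0 : 0 ≤ q) (hq1 : q < 1) (hxs : Function.IsFixedPt S xs) (y : X) (m : ℕ) :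
    dist (S^[m] y) xs ≤ q ^ m * (dist y (S y) / (1 - q)) := by
  induction m with
  | zero => simpa using dist_le_of_isFixedPt hS hq0 hq1 hxs y
  | succ m ih =>
    calc dist (S^[m + 1] y) xs
        ≤ q * max (dist (S^[m] y) xs) (dist (S^[m] y) (S (S^[m] y))) := by
          rw [Function.iterate_succ_apply']
          exact dist_apply_le_of_isFixedPt_s7 hS hq0 hq1 hxs _
      _ ≤ q * (q ^ m * (dist y (S y) / (1 - q))) := by
          rw [← Function.iterate_succ_apply' S]
          gcongr
          exact max_le ih (dist_iterate_iterate_le_pow hS hq0 hq1 y le_rfl (by omega))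
      _ = q ^ (m + 1) * (dist y (S y) / (1 - q)) := by ring

end QuasiContraction

/-- Error estimate when some iterate `Tᵏ` (`k ≥ 1`) satisfies the
generalized quasi-contraction condition. -/
theorem stmt7 {X : Type*} [MetricSpace X] (T : X → X) (k : ℕ) (hk : 1 ≤ k)
    (q : ℝ) (hq0 : 0 ≤ q) (hq1 : q < 1)
    (hT : ∀ x y : X, dist (T^[k] x) (T^[k] y) ≤ q * (max (dist x y) (max (dist x (T^[k] x)) (max (dist y (T^[k] y)) (max (dist x (T^[k] y)) (max (dist y (T^[k] x)) (max (dist (T^[2*k] x) x) (max (dist (T^[2*k] x) (T^[k] x)) (max (dist (T^[2*k] x) y) (dist (T^[2*k] x) (T^[k] y)))))))))))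
    (xs : X) (hfix : T xs = xs)
    : ∀ (x : X) (n : ℕ), dist (T^[n] x) xs ≤ q ^ (n / k) / (1 - q) *
        (Finset.range k).sup' (Finset.nonempty_range_iff.mpr (by omega))
          (fun i => dist (T^[i] x) (T^[i + k] x)) := by
  intro x n
  have hS : IsQuasiContraction T^[k] q := by
    intro a b
    have h := hT a b
    rwa [two_mul, Function.iterate_add_apply] at h
  have hn : T^[n] x = (T^[k])^[n / k] (T^[n % k] x) := by
    rw [← Function.iterate_mul, ← Function.iterate_add_apply, Nat.div_add_mod]
  have hstart : dist (T^[n % k] x) (T^[k] (T^[n % k] x)) ≤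
      (Finset.range k).sup' (Finset.nonempty_range_iff.mpr (by omega))
        (fun i => dist (T^[i] x) (T^[i + k] x)) := by
    rw [← Function.iterate_add_apply, add_comm]
    exact Finset.le_sup' (fun i => dist (T^[i] x) (T^[i + k] x))
      (Finset.mem_range.mpr (Nat.mod_lt _ (by omega)))
  calc dist (T^[n] x) xs
      ≤ q ^ (n / k) * (dist (T^[n % k] x) (T^[k] (T^[n % k] x)) / (1 - q)) := hn ▸
        dist_iterate_le_of_isFixedPt_s7 hS hq0 hq1 (Function.IsFixedPt.iterate hfix k) _ _
    _ = q ^ (n / k) / (1 - q) * dist (T^[n % k] x) (T^[k] (T^[n % k] x)) := by ring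
    _ ≤ _ := by gcongr
end

section
/- Let (X,d) be a metric space and F : X → BN(X) a multi-valued map which is a generalized quasi-contraction with constant q ∈ [0,1), and suppose X is F-orbitally complete, with unique fixed point x* (so Fx* = {x*}). Then for each x₀ ∈ X and each fixed a ∈ (0,1), there exists an orbit (x_n) of F at x₀ such that lim_{n→∞} x_n = x* and d(x_n, x*) ≤ ((q^{1−a})ⁿ / (1 − q^{1−a})) · d(x₀, x₁) for all n ∈ ℕ. -/
/-!
Choose the orbit so that every step nearly realises `ρ(u n, F (u n))`, namely
`b · ρ(u n, F (u n)) ≤ d(u n, u (n+1))` with `b = q^a < 1`. Then each term of the contractive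
condition at `(u k, u j)`, `k < j`, is a distance inside the segment `u k, …, u (j+1)`, except the
terms `ρ(x, F x)`, which cost a factor `1 / b`. Hence
`d(u (k+1), u (j+1)) ≤ Q · diam {u k, …, u (j+1)}` with `Q = q / b = q^(1-a)`, and Ćirić's
argument makes the segment diameters decay like `Qⁿ · d(u 0, u 1) / (1 - Q)`.
Testing the condition against the fixed point (`F x* = {x*}`) bounds `d(u (n+1), x*)` by a
multiple of `d(u n, u (n+1))`, so the orbit converges to `x*`, and the estimate is the limit
`m → ∞` of the bound on `d(u n, u m)`.
-/

open Filter Topology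

noncomputable def setRho {X : Type*} [MetricSpace X] (A B : Set X) : ℝ :=
  sSup {r : ℝ | ∃ a ∈ A, ∃ b ∈ B, r = dist a b}

noncomputable def setD {X : Type*} [MetricSpace X] (A B : Set X) : ℝ :=
  sInf {r : ℝ | ∃ a ∈ A, ∃ b ∈ B, r = dist a b}

open Set Metric

section CiricSequence

variable {X : Type*} [PseudoMetricSpace X] {u : ℕ → X} {Q : ℝ}

lemma isBounded_image_Icc (u : ℕ → X) (i j : ℕ) : Bornology.IsBounded (u '' Icc i j) :=
  ((finite_Icc i j).image u).isBounded

lemma diam_image_le_of_forall_lt {s : Set ℕ} {C : ℝ} (hC : 0 ≤ C)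
    (h : ∀ p ∈ s, ∀ p' ∈ s, p < p' → dist (u p) (u p') ≤ C) : diam (u '' s) ≤ C := by
  refine diam_le_of_forall_dist_le hC ?_
  rintro _ ⟨p, hp, rfl⟩ _ ⟨p', hp', rfl⟩
  rcases lt_trichotomy p p' with hlt | rfl | hgt
  · exact h p hp p' hp' hlt
  · rwa [dist_self]
  · rw [dist_comm]; exact h p' hp' p hp hgt

lemma dist_le_mul_diam_of_lt (hQ0 : 0 ≤ Q)
    (h : ∀ k j, k < j → dist (u (k + 1)) (u (j + 1)) ≤ Q * diam (u '' Icc k (j + 1)))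
    {i j p p' : ℕ} (hip : i < p) (hpp' : p < p') (hp'j : p' ≤ j) :
    dist (u p) (u p') ≤ Q * diam (u '' Icc i j) := by
  obtain ⟨k, rfl⟩ : ∃ k, p = k + 1 := ⟨p - 1, by omega⟩
  obtain ⟨l, rfl⟩ : ∃ l, p' = l + 1 := ⟨p' - 1, by omega⟩
  refine (h k l (by omega)).trans (mul_le_mul_of_nonneg_left ?_ hQ0)
  exact diam_mono (image_mono (Icc_subset_Icc (by omega) hp'j)) (isBounded_image_Icc u i j)

lemma diam_image_Icc_succ_le (hQ0 : 0 ≤ Q)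
    (h : ∀ k j, k < j → dist (u (k + 1)) (u (j + 1)) ≤ Q * diam (u '' Icc k (j + 1)))
    (i j : ℕ) : diam (u '' Icc (i + 1) j) ≤ Q * diam (u '' Icc i j) :=
  diam_image_le_of_forall_lt (mul_nonneg hQ0 diam_nonneg) fun _ hp _ hp' hpp' =>
    dist_le_mul_diam_of_lt hQ0 h (by grind) hpp' (mem_Icc.1 hp').2

lemma diam_image_Icc_zero_le (hQ0 : 0 ≤ Q) (hQ1 : Q < 1)
    (h : ∀ k j, k < j → dist (u (k + 1)) (u (j + 1)) ≤ Q * diam (u '' Icc k (j + 1)))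
    (j : ℕ) : diam (u '' Icc 0 j) ≤ dist (u 0) (u 1) / (1 - Q) := by
  set δ := diam (u '' Icc 0 j)
  suffices hδ : δ ≤ dist (u 0) (u 1) + Q * δ by
    rw [le_div_iff₀ (by linarith)]; linarith
  have hQδ : 0 ≤ Q * δ := mul_nonneg hQ0 diam_nonneg
  refine diam_image_le_of_forall_lt (by positivity) fun p _ p' hp' hpp' => ?_
  have hp'j : p' ≤ j := (mem_Icc.1 hp').2
  rcases Nat.eq_zero_or_pos p with rfl | hp
  · have h1p' : dist (u 1) (u p') ≤ Q * δ := by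
      rcases (show 1 ≤ p' by omega).eq_or_lt with rfl | h1
      · rwa [dist_self]
      · exact dist_le_mul_diam_of_lt hQ0 h zero_lt_one h1 hp'j
    linarith [dist_triangle (u 0) (u 1) (u p')]
  · linarith [dist_le_mul_diam_of_lt hQ0 h hp hpp' hp'j, dist_nonneg (x := u 0) (y := u 1)]

lemma dist_le_geometric_of_dist_le_mul_diam (hQ0 : 0 ≤ Q) (hQ1 : Q < 1)
    (h : ∀ k j, k < j → dist (u (k + 1)) (u (j + 1)) ≤ Q * diam (u '' Icc k (j + 1)))
    {n m : ℕ} (hnm : n ≤ m) : dist (u n) (u m) ≤ Q ^ n / (1 - Q) * dist (u 0) (u 1) := by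
  have hiter : ∀ i, diam (u '' Icc i m) ≤ Q ^ i * diam (u '' Icc 0 m) := by
    intro i
    induction i with
    | zero => simp
    | succ i ih =>
      calc diam (u '' Icc (i + 1) m) ≤ Q * diam (u '' Icc i m) := diam_image_Icc_succ_le hQ0 h i m
      _ ≤ Q * (Q ^ i * diam (u '' Icc 0 m)) := mul_le_mul_of_nonneg_left ih hQ0
      _ = Q ^ (i + 1) * diam (u '' Icc 0 m) := by ring
  calc dist (u n) (u m) ≤ diam (u '' Icc n m) :=
        dist_le_diam_of_mem (isBounded_image_Icc u n m) (mem_image_of_mem u ⟨le_rfl, hnm⟩)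
          (mem_image_of_mem u ⟨hnm, le_rfl⟩)
  _ ≤ Q ^ n * diam (u '' Icc 0 m) := hiter n
  _ ≤ Q ^ n * (dist (u 0) (u 1) / (1 - Q)) :=
        mul_le_mul_of_nonneg_left (diam_image_Icc_zero_le hQ0 hQ1 h m) (pow_nonneg hQ0 n)
  _ = Q ^ n / (1 - Q) * dist (u 0) (u 1) := by ring

end CiricSequence

section SetDistances

variable {X : Type*} [MetricSpace X]

lemma setRho_nonneg (A B : Set X) : 0 ≤ setRho A B :=
  Real.sSup_nonneg (by rintro r ⟨a, -, b, -, rfl⟩; exact dist_nonneg)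

lemma dist_le_setRho {A B : Set X} (hA : Bornology.IsBounded A) (hB : Bornology.IsBounded B) {a b : X}
    (ha : a ∈ A) (hb : b ∈ B) : dist a b ≤ setRho A B := by
  obtain ⟨C, hC⟩ := isBounded_iff.mp (hA.union hB)
  refine le_csSup ⟨C, ?_⟩ ⟨a, ha, b, hb, rfl⟩
  rintro r ⟨a, ha, b, hb, rfl⟩
  exact hC (Or.inl ha) (Or.inr hb)

lemma setRho_singleton (x y : X) : setRho {x} {y} = dist x y := by
  simp [setRho]

lemma setD_le_dist {A B : Set X} {a b : X} (ha : a ∈ A) (hb : b ∈ B) : setD A B ≤ dist a b :=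
  csInf_le ⟨0, by rintro r ⟨a, -, b, -, rfl⟩; exact dist_nonneg⟩ ⟨a, ha, b, hb, rfl⟩

lemma exists_mem_lt_dist_of_lt_setRho {x : X} {B : Set X} (hB : B.Nonempty) {c : ℝ}
    (h : c < setRho {x} B) : ∃ b ∈ B, c < dist x b := by
  obtain ⟨b₀, hb₀⟩ := hB
  obtain ⟨_, ⟨a, ha, b, hb, rfl⟩, hlt⟩ := exists_lt_of_lt_csSup (by exact ⟨_, x, rfl, b₀, hb₀, rfl⟩) h
  rw [mem_singleton_iff.1 ha] at hlt
  exact ⟨b, hb, hlt⟩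

end SetDistances

section QuasiContraction

variable {X : Type*} [MetricSpace X] {F : X → Set X} {q : ℝ}

def IsGenQuasiContraction (F : X → Set X) (q : ℝ) : Prop :=
  ∀ x y : X, setRho (F x) (F y) ≤ q * (max (dist x y) (max (setRho {x} (F x))
    (max (setRho {y} (F y)) (max (setD {x} (F y)) (max (setD {y} (F x))
    (max (setD (⋃ z ∈ F x, F z) {x}) (max (setD (⋃ z ∈ F x, F z) (F x))
    (max (setD (⋃ z ∈ F x, F z) {y}) (setD (⋃ z ∈ F x, F z) (F y))))))))))

lemma exists_orbit_mul_setRho_le (hne : ∀ x, (F x).Nonempty) {b Q : ℝ} (hb : b < 1)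
    (hQ0 : 0 ≤ Q) (hqQb : q ≤ Q * b) (x₀ : X) :
    ∃ u : ℕ → X, u 0 = x₀ ∧ ∀ n, u (n + 1) ∈ F (u n) ∧
      q * setRho {u n} (F (u n)) ≤ Q * dist (u n) (u (n + 1)) := by
  have hstep : ∀ x, ∃ y ∈ F x, q * setRho {x} (F x) ≤ Q * dist x y := by
    intro x
    have hρ := setRho_nonneg {x} (F x)
    obtain ⟨y, hy, hby⟩ : ∃ y ∈ F x, b * setRho {x} (F x) ≤ dist x y := by
      rcases hρ.eq_or_lt with hρ0 | hρpos
      · obtain ⟨y, hy⟩ := hne x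
        exact ⟨y, hy, by rw [← hρ0, mul_zero]; exact dist_nonneg⟩
      · obtain ⟨y, hy, hlt⟩ :=
          exists_mem_lt_dist_of_lt_setRho (hne x) (mul_lt_of_lt_one_left hρpos hb)
        exact ⟨y, hy, hlt.le⟩
    refine ⟨y, hy, ?_⟩
    calc q * setRho {x} (F x) ≤ Q * b * setRho {x} (F x) := mul_le_mul_of_nonneg_right hqQb hρ
    _ ≤ Q * dist x y := by rw [mul_assoc]; exact mul_le_mul_of_nonneg_left hby hQ0
  choose g hgF hg using hstep
  refine ⟨fun n => g^[n] x₀, rfl, fun n => ?_⟩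
  simp only [Function.iterate_succ_apply']
  exact ⟨hgF _, hg _⟩

namespace IsGenQuasiContraction

lemma dist_succ_le_mul_diam (hF : IsGenQuasiContraction F q)
    (hbd : ∀ x, Bornology.IsBounded (F x)) (hq0 : 0 ≤ q) {Q : ℝ} (hQ0 : 0 ≤ Q) (hqQ : q ≤ Q) {u : ℕ → X}
    (horbit : ∀ n, u (n + 1) ∈ F (u n))
    (hsel : ∀ n, q * setRho {u n} (F (u n)) ≤ Q * dist (u n) (u (n + 1)))
    {k j : ℕ} (hkj : k < j) :
    dist (u (k + 1)) (u (j + 1)) ≤ Q * diam (u '' Icc k (j + 1)) := by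
  set δ := diam (u '' Icc k (j + 1))
  have hd : ∀ {p p'}, p ∈ Icc k (j + 1) → p' ∈ Icc k (j + 1) → dist (u p) (u p') ≤ δ :=
    fun hp hp' => dist_le_diam_of_mem (isBounded_image_Icc u _ _) (mem_image_of_mem u hp)
      (mem_image_of_mem u hp')
  have hqd : ∀ {p p'}, p ∈ Icc k (j + 1) → p' ∈ Icc k (j + 1) → q * dist (u p) (u p') ≤ Q * δ :=
    fun hp hp' => mul_le_mul hqQ (hd hp hp') dist_nonneg hQ0
  have hqD : ∀ {A B p p'}, u p ∈ A → u p' ∈ B → p ∈ Icc k (j + 1) → p' ∈ Icc k (j + 1) →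
      q * setD A B ≤ Q * δ :=
    fun ha hb hp hp' => (mul_le_mul_of_nonneg_left (setD_le_dist ha hb) hq0).trans (hqd hp hp')
  have hqρ : ∀ {p}, p ∈ Icc k j → q * setRho {u p} (F (u p)) ≤ Q * δ := fun hp =>
    (hsel _).trans (mul_le_mul_of_nonneg_left (hd (by grind) (by grind)) hQ0)
  have hF2 : u (k + 2) ∈ ⋃ z ∈ F (u k), F z := mem_biUnion (horbit k) (horbit (k + 1))
  calc dist (u (k + 1)) (u (j + 1)) ≤ setRho (F (u k)) (F (u j)) :=
        dist_le_setRho (hbd _) (hbd _) (horbit k) (horbit j)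
  _ ≤ _ := hF _ _
  _ ≤ Q * δ := by
    simp only [mul_max_of_nonneg _ _ hq0]
    refine max_le (hqd ?_ ?_) (max_le (hqρ ?_) (max_le (hqρ ?_) (max_le
      (hqD (mem_singleton _) (horbit j) ?_ ?_) (max_le (hqD (mem_singleton _) (horbit k) ?_ ?_)
      (max_le (hqD hF2 (mem_singleton _) ?_ ?_) (max_le (hqD hF2 (horbit k) ?_ ?_)
      (max_le (hqD hF2 (mem_singleton _) ?_ ?_) (hqD hF2 (horbit j) ?_ ?_))))))))
    all_goals grind

lemma setRho_fixedPoint_le (hF : IsGenQuasiContraction F q) (hne : ∀ x, (F x).Nonempty)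
    (hbd : ∀ x, Bornology.IsBounded (F x)) (hq0 : 0 ≤ q) (hq1 : q < 1) {xs : X} (hfix : F xs = {xs})
    (x : X) : setRho {xs} (F x) ≤ q * max (dist x xs) (setRho {x} (F x)) := by
  set r := setRho {xs} (F x)
  set m := max (dist x xs) (setRho {x} (F x))
  have hm : 0 ≤ m := dist_nonneg.trans (le_max_left _ _)
  have hxm : dist x xs ≤ max m r := (le_max_left _ _).trans (le_max_left _ _)
  have hDr : setD {xs} (F x) ≤ max m r := by
    obtain ⟨y, hy⟩ := hne x
    exact (setD_le_dist (mem_singleton xs) hy).trans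
      ((dist_le_setRho Bornology.isBounded_singleton (hbd x) (mem_singleton xs) hy).trans (le_max_right _ _))
  have h0 : ∀ {A B : Set X}, xs ∈ A → xs ∈ B → setD A B ≤ max m r := fun ha hb =>
    (setD_le_dist ha hb).trans (by rw [dist_self]; exact hm.trans (le_max_left _ _))
  have key : r ≤ q * max m r := by
    have h := hF xs x
    rw [hfix, biUnion_singleton, hfix, setRho_singleton, dist_self] at h
    refine h.trans (mul_le_mul_of_nonneg_left ?_ hq0)
    refine max_le (dist_comm x xs ▸ hxm) (max_le (hm.trans (le_max_left _ _)) (max_le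
      ((le_max_right _ _).trans (le_max_left _ _)) (max_le hDr (max_le
      ((setD_le_dist (mem_singleton x) (mem_singleton xs)).trans hxm) (max_le
      (h0 rfl rfl) (max_le (h0 rfl rfl) (max_le
      ((setD_le_dist (mem_singleton xs) (mem_singleton x)).trans (dist_comm x xs ▸ hxm)) hDr)))))))
  rcases le_total r m with hrm | hmr
  · rwa [max_eq_left hrm] at key
  · rw [max_eq_right hmr] at key
    nlinarith [mul_nonneg hq0 hm]

lemma dist_fixedPoint_le (hF : IsGenQuasiContraction F q) (hne : ∀ x, (F x).Nonempty)
    (hbd : ∀ x, Bornology.IsBounded (F x)) (hq0 : 0 ≤ q) (hq1 : q < 1) {Q : ℝ} {xs : X}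
    (hfix : F xs = {xs}) {x y : X} (hy : y ∈ F x)
    (hsel : q * setRho {x} (F x) ≤ Q * dist x y) :
    dist y xs ≤ (q + Q) / (1 - q) * dist x y := by
  set r := setRho {xs} (F x)
  have hyr : dist y xs ≤ r := by
    rw [dist_comm]; exact dist_le_setRho Bornology.isBounded_singleton (hbd x) (mem_singleton xs) hy
  have hr : r ≤ q * (dist x xs + setRho {x} (F x)) :=
    (hF.setRho_fixedPoint_le hne hbd hq0 hq1 hfix x).trans (mul_le_mul_of_nonneg_left
      (max_le_add_of_nonneg dist_nonneg (setRho_nonneg _ _)) hq0)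
  have hxs : dist x xs ≤ dist x y + r := (dist_triangle x y xs).trans (by linarith)
  rw [div_mul_eq_mul_div, le_div_iff₀ (by linarith)]
  nlinarith

theorem exists_orbit_tendsto (hF : IsGenQuasiContraction F q) (hne : ∀ x, (F x).Nonempty)
    (hbd : ∀ x, Bornology.IsBounded (F x)) (hq0 : 0 ≤ q) (hq1 : q < 1) {b Q : ℝ} (hb : b < 1)
    (hQ0 : 0 ≤ Q) (hQ1 : Q < 1) (hqQb : q ≤ Q * b) {xs : X} (hfix : F xs = {xs}) (x₀ : X) :
    ∃ u : ℕ → X, u 0 = x₀ ∧ (∀ n, u (n + 1) ∈ F (u n)) ∧ Tendsto u atTop (𝓝 xs) ∧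
      ∀ n, dist (u n) xs ≤ Q ^ n / (1 - Q) * dist (u 0) (u 1) := by
  obtain ⟨u, rfl, hu⟩ := exists_orbit_mul_setRho_le hne hb hQ0 hqQb x₀
  have hqQ : q ≤ Q := hqQb.trans (mul_le_of_le_one_right hQ0 hb.le)
  have hgeom : ∀ {n m}, n ≤ m → dist (u n) (u m) ≤ Q ^ n / (1 - Q) * dist (u 0) (u 1) :=
    dist_le_geometric_of_dist_le_mul_diam hQ0 hQ1 fun _ _ hkj =>
      hF.dist_succ_le_mul_diam hbd hq0 hQ0 hqQ (fun n => (hu n).1) (fun n => (hu n).2) hkj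
  have hC : 0 ≤ (q + Q) / (1 - q) := div_nonneg (by linarith) (by linarith)
  have hlim : Tendsto u atTop (𝓝 xs) := by
    rw [tendsto_iff_dist_tendsto_zero, ← tendsto_add_atTop_iff_nat 1]
    have hbound : Tendsto (fun n => (q + Q) / (1 - q) * (Q ^ n / (1 - Q) * dist (u 0) (u 1)))
        atTop (𝓝 0) := by
      simpa using (((tendsto_pow_atTop_nhds_zero_of_lt_one hQ0 hQ1).div_const (1 - Q)).mul_const
        (dist (u 0) (u 1))).const_mul ((q + Q) / (1 - q))
    refine squeeze_zero (fun _ => dist_nonneg) (fun n => ?_) hbound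
    exact (hF.dist_fixedPoint_le hne hbd hq0 hq1 hfix (hu n).1 (hu n).2).trans
      (mul_le_mul_of_nonneg_left (hgeom n.le_succ) hC)
  refine ⟨u, rfl, fun n => (hu n).1, hlim, fun n => ?_⟩
  exact le_of_tendsto (tendsto_const_nhds.dist hlim) (eventually_atTop.2 ⟨n, fun m hm => hgeom hm⟩)

end IsGenQuasiContraction

end QuasiContraction

theorem stmt13_general {X : Type*} [MetricSpace X] (F : X → Set X)
    (hne : ∀ x : X, (F x).Nonempty) (hbd : ∀ x : X, Bornology.IsBounded (F x))
    (q : ℝ) (hq0 : 0 ≤ q) (hq1 : q < 1)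
    (hF : ∀ x y : X, setRho (F x) (F y) ≤ q * (max (dist x y) (max (setRho {x} (F x)) (max (setRho {y} (F y)) (max (setD {x} (F y)) (max (setD {y} (F x)) (max (setD (⋃ z ∈ F x, F z) {x}) (max (setD (⋃ z ∈ F x, F z) (F x)) (max (setD (⋃ z ∈ F x, F z) {y}) (setD (⋃ z ∈ F x, F z) (F y)))))))))))
    (xs : X) (hfix : F xs = {xs})
    (a : ℝ) (ha0 : 0 < a) (ha1 : a < 1)
    : ∀ x₀ : X, ∃ u : ℕ → X, u 0 = x₀ ∧ (∀ n : ℕ, u (n + 1) ∈ F (u n)) ∧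
        Tendsto u atTop (𝓝 xs) ∧
        ∀ n : ℕ, dist (u n) xs ≤ (q ^ (1 - a)) ^ n / (1 - q ^ (1 - a)) * dist (u 0) (u 1) := by
  have hsplit : q = q ^ (1 - a) * q ^ a := by
    rw [← Real.rpow_add' hq0 (by norm_num), sub_add_cancel, Real.rpow_one]
  exact IsGenQuasiContraction.exists_orbit_tendsto hF hne hbd hq0 hq1
    (Real.rpow_lt_one hq0 hq1 ha0) (Real.rpow_nonneg hq0 _)
    (Real.rpow_lt_one hq0 hq1 (by linarith)) hsplit.le hfix

/-- Convergent orbits with error estimate for a multi-valued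
generalized quasi-contraction on an `F`-orbitally complete metric space. -/
theorem stmt13 {X : Type*} [MetricSpace X] (F : X → Set X)
    (hne : ∀ x : X, (F x).Nonempty) (hbd : ∀ x : X, Bornology.IsBounded (F x))
    (q : ℝ) (hq0 : 0 ≤ q) (hq1 : q < 1)
    (hF : ∀ x y : X, setRho (F x) (F y) ≤ q * (max (dist x y) (max (setRho {x} (F x)) (max (setRho {y} (F y)) (max (setD {x} (F y)) (max (setD {y} (F x)) (max (setD (⋃ z ∈ F x, F z) {x}) (max (setD (⋃ z ∈ F x, F z) (F x)) (max (setD (⋃ z ∈ F x, F z) {y}) (setD (⋃ z ∈ F x, F z) (F y)))))))))))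
    (horb : ∀ o : ℕ → X, (∀ n : ℕ, o (n + 1) ∈ F (o n)) → ∀ φ : ℕ → ℕ, StrictMono φ →
      CauchySeq (o ∘ φ) → ∃ y : X, Tendsto (o ∘ φ) atTop (𝓝 y))
    (xs : X) (hfix : F xs = {xs}) (huniq : ∀ y : X, y ∈ F y → y = xs)
    (a : ℝ) (ha0 : 0 < a) (ha1 : a < 1)
    : ∀ x₀ : X, ∃ u : ℕ → X, u 0 = x₀ ∧ (∀ n : ℕ, u (n + 1) ∈ F (u n)) ∧
        Tendsto u atTop (𝓝 xs) ∧
        ∀ n : ℕ, dist (u n) xs ≤ (q ^ (1 - a)) ^ n / (1 - q ^ (1 - a)) * dist (u 0) (u 1) :=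
  stmt13_general F hne hbd q hq0 hq1 hF xs hfix a ha0 ha1
end

section
/- Let (X,d) be a metric space, T : X → X a generalized quasi-contraction with constant q ∈ [0,1), and suppose that for some x ∈ X the sequence of iterates (Tⁿx) converges to a point x* ∈ X. Then x* is a fixed point of T, i.e. Tx* = x*. -/
/-!
Along the orbit `u = Tⁿx`, the points `u`, `Tu` and `T²u` all tend to `x*`, so every term of the
quasi-contraction bound for the pair `(u, x*)` tends either to `0` or to `d(x*, Tx*)`, while
`d(Tu, Tx*)` tends to `d(x*, Tx*)`. Passing to the limit gives `d(x*, Tx*) ≤ q · d(x*, Tx*)`, and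
`q < 1` forces `d(x*, Tx*) = 0`.
-/

open Filter Topology Function

namespace Metric

variable {X : Type*} [MetricSpace X]

/-- Takes `Tx`, `T²x`, `Ty` as independent points so that its continuity is a statement about
`X × X × X`, with no continuity of `T` involved. -/
def quasiContractionBound (x Tx TTx y Ty : X) : ℝ :=
  max (dist x y) (max (dist x Tx) (max (dist y Ty) (max (dist x Ty) (max (dist y Tx)
    (max (dist TTx x) (max (dist TTx Tx) (max (dist TTx y) (dist TTx Ty))))))))

def IsGeneralizedQuasiContraction (T : X → X) (q : ℝ) : Prop :=
  ∀ x y : X, dist (T x) (T y) ≤ q * quasiContractionBound x (T x) (T (T x)) y (T y)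

theorem continuous_quasiContractionBound (y Ty : X) :
    Continuous fun p : X × X × X => quasiContractionBound p.1 p.2.1 p.2.2 y Ty := by
  unfold quasiContractionBound
  fun_prop

theorem quasiContractionBound_self (y Ty : X) :
    quasiContractionBound y y y y Ty = dist y Ty := by
  simp [quasiContractionBound]

theorem tendsto_quasiContractionBound {u v w : ℕ → X} {y Ty : X}
    (hu : Tendsto u atTop (𝓝 y)) (hv : Tendsto v atTop (𝓝 y)) (hw : Tendsto w atTop (𝓝 y)) :
    Tendsto (fun n => quasiContractionBound (u n) (v n) (w n) y Ty) atTop (𝓝 (dist y Ty)) := by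
  rw [← quasiContractionBound_self y Ty]
  exact ((continuous_quasiContractionBound y Ty).tendsto (y, y, y)).comp
    (hu.prodMk_nhds (hv.prodMk_nhds hw))

theorem tendsto_iterate_add_of_tendsto_iterate {T : X → X} {x y : X}
    (h : Tendsto (fun n => T^[n] x) atTop (𝓝 y)) (k : ℕ) :
    Tendsto (fun n => T^[k] (T^[n] x)) atTop (𝓝 y) := by
  convert h.comp (tendsto_add_atTop_nat k) using 2 with n
  rw [comp_apply, ← iterate_add_apply, Nat.add_comm]

namespace IsGeneralizedQuasiContraction

variable {T : X → X} {q : ℝ}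

theorem dist_le_mul_of_tendsto_iterate (hT : IsGeneralizedQuasiContraction T q) {x y : X}
    (h : Tendsto (fun n => T^[n] x) atTop (𝓝 y)) :
    dist y (T y) ≤ q * dist y (T y) := by
  have h₁ := tendsto_iterate_add_of_tendsto_iterate h 1
  have h₂ := tendsto_iterate_add_of_tendsto_iterate h 2
  have hdist : Tendsto (fun n => dist (T (T^[n] x)) (T y)) atTop (𝓝 (dist y (T y))) :=
    h₁.dist tendsto_const_nhds
  have hbound := (tendsto_quasiContractionBound h h₁ h₂ (Ty := T y)).const_mul q
  exact le_of_tendsto_of_tendsto' hdist hbound fun n => hT _ _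

theorem isFixedPt_of_tendsto_iterate (hT : IsGeneralizedQuasiContraction T q) (hq : q < 1)
    {x y : X} (h : Tendsto (fun n => T^[n] x) atTop (𝓝 y)) : IsFixedPt T y := by
  have hle := hT.dist_le_mul_of_tendsto_iterate h
  have hzero : dist y (T y) = 0 := by nlinarith [dist_nonneg (x := y) (y := T y)]
  exact (dist_eq_zero.mp hzero).symm

end IsGeneralizedQuasiContraction

end Metric

theorem stmt17_general {X : Type*} [MetricSpace X] (T : X → X) (q : ℝ) (hq1 : q < 1)
    (hT : ∀ x y : X, dist (T x) (T y) ≤ q * (max (dist x y) (max (dist x (T x)) (max (dist y (T y)) (max (dist x (T y)) (max (dist y (T x)) (max (dist (T (T x)) x) (max (dist (T (T x)) (T x)) (max (dist (T (T x)) y) (dist (T (T x)) (T y)))))))))))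
    (x xs : X) (hconv : Tendsto (fun n : ℕ => T^[n] x) atTop (𝓝 xs)) : T xs = xs :=
  Metric.IsGeneralizedQuasiContraction.isFixedPt_of_tendsto_iterate hT hq1 hconv

/-- If the Picard iterates of a generalized quasi-contraction converge
to some point, that point is a fixed point of `T`. -/
theorem stmt17 {X : Type*} [MetricSpace X] (T : X → X) (q : ℝ) (hq0 : 0 ≤ q) (hq1 : q < 1)
    (hT : ∀ x y : X, dist (T x) (T y) ≤ q * (max (dist x y) (max (dist x (T x)) (max (dist y (T y)) (max (dist x (T y)) (max (dist y (T x)) (max (dist (T (T x)) x) (max (dist (T (T x)) (T x)) (max (dist (T (T x)) y) (dist (T (T x)) (T y)))))))))))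
    (x xs : X) (hconv : Tendsto (fun n : ℕ => T^[n] x) atTop (𝓝 xs)) : T xs = xs :=
  stmt17_general T q hq1 hT x xs hconv
end
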